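/- arXiv:2211.07291 — 2 statements merged into one kernel-verified Lean document; each statement's English description precedes it below -/
import Mathlib

section
/- Let $A = M_2(\mathbb{C})$, $B = \mathbb{C} I_2$, $E([a_{ij}]) = (a_{11}t + a_{22}(1-t)) I_2$ for a fixed $t \in (0,1)$ with $t \ne 1/2$, $\Delta$ the diagonal subalgebra with $F$ the diagonal expectation, and $u = \frac{1}{\sqrt{2}}\begin{pmatrix}1 & i \\ i & 1\end{pmatrix}$. Then $E \circ F_u \ne E$, where $F_u(a) = uF(u^*au)u^*$. In fact, $(E\circ F_u)([a_{ij}]) = \frac{a_{11}+a_{22}}{2} I_2$. -/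
/-- The (generally non-tracial) conditional expectation `M₂(ℂ) → ℂ I₂`
given by `E([a_{ij}]) = (a₁₁ t + a₂₂ (1-t)) I₂`. -/
noncomputable def trEt (t : ℝ) (x : Matrix (Fin 2) (Fin 2) ℂ) : Matrix (Fin 2) (Fin 2) ℂ :=
  (x 0 0 * (t : ℂ) + x 1 1 * ((1 : ℂ) - (t : ℂ))) • (1 : Matrix (Fin 2) (Fin 2) ℂ)

/-- The diagonal conditional expectation `M₂(ℂ) → Δ`. -/
def diagF (x : Matrix (Fin 2) (Fin 2) ℂ) : Matrix (Fin 2) (Fin 2) ℂ :=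
  Matrix.diagonal (fun i => x i i)

/-- The conjugated conditional expectation `F_u = Ad_u ∘ F ∘ Ad_{u*}`. -/
noncomputable def Fu (u a : Matrix (Fin 2) (Fin 2) ℂ) : Matrix (Fin 2) (Fin 2) ℂ :=
  u * diagF (star u * a * u) * star u

/-- The unitary `u = (1/√2) [[1, i], [i, 1]]`. -/
noncomputable def u₀ : Matrix (Fin 2) (Fin 2) ℂ :=
  ((Real.sqrt 2 : ℂ))⁻¹ • Matrix.of ![![1, Complex.I], ![Complex.I, 1]]

/-- Both diagonal entries of `F_{u₀}(a)` equal `(a₀₀ + a₁₁)/2`. -/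
lemma Fu_u₀_diag (a : Matrix (Fin 2) (Fin 2) ℂ) (i : Fin 2) :
    (Fu u₀ a) i i = (a 0 0 + a 1 1) / 2 := by
  have h2 : (Real.sqrt 2 : ℂ) * (Real.sqrt 2 : ℂ) = 2 := by
    norm_cast; exact Real.mul_self_sqrt (by norm_num)
  have hr : ((Real.sqrt 2 : ℂ))⁻¹ * ((Real.sqrt 2 : ℂ))⁻¹ = 1/2 := by
    rw [← mul_inv, h2]; norm_num
  have h4 : ((Real.sqrt 2 : ℂ))⁻¹ ^ 4 = 1/4 := by
    rw [show (4:ℕ) = 2*2 from rfl, pow_mul, sq, sq, hr]; norm_num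
  have hI4 : Complex.I ^ 4 = 1 := by
    rw [show (4:ℕ) = 2*2 from rfl, pow_mul, Complex.I_sq]; norm_num
  have hI3 : Complex.I ^ 3 = -Complex.I := by
    rw [pow_succ, Complex.I_sq]; ring
  fin_cases i <;>
  · simp [Fu, diagF, u₀, Matrix.mul_apply, Fin.sum_univ_two, Matrix.diagonal_apply,
      Matrix.star_apply, Complex.star_def, Matrix.smul_apply, Matrix.vecMul,
      dotProduct, Matrix.vecHead, Matrix.vecTail]
    ring_nf
    simp only [Complex.I_sq, h4, hI4, hI3]
    ring

theorem stmt_10 (t : ℝ) (ht : t ∈ Set.Ioo (0:ℝ) 1) (ht' : t ≠ 1/2) :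
    (∀ a : Matrix (Fin 2) (Fin 2) ℂ,
        trEt t (Fu u₀ a) = ((a 0 0 + a 1 1) / 2) • (1 : Matrix (Fin 2) (Fin 2) ℂ)) ∧
    trEt t ∘ Fu u₀ ≠ trEt t := by
  have key : ∀ a : Matrix (Fin 2) (Fin 2) ℂ,
      trEt t (Fu u₀ a) = ((a 0 0 + a 1 1) / 2) • (1 : Matrix (Fin 2) (Fin 2) ℂ) := by
    intro a
    unfold trEt
    rw [Fu_u₀_diag a 0, Fu_u₀_diag a 1]
    congr 1
    ring
  refine ⟨key, ?_⟩
  intro h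
  set a : Matrix (Fin 2) (Fin 2) ℂ := Matrix.of ![![1, 0], ![0, 0]] with ha
  have h1 : trEt t (Fu u₀ a) = trEt t a := congrFun h a
  have h2 : trEt t (Fu u₀ a) = ((1:ℂ) / 2) • (1 : Matrix (Fin 2) (Fin 2) ℂ) := by
    rw [key a]; norm_num [ha]
  have h3 : trEt t a = (t : ℂ) • (1 : Matrix (Fin 2) (Fin 2) ℂ) := by
    unfold trEt
    norm_num [ha]
  rw [h2, h3] at h1
  have h5 : ((1:ℂ)/2) = (t : ℂ) := by
    have := congrFun (congrFun h1 0) 0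
    simpa [Matrix.smul_apply, Matrix.one_apply] using this
  apply ht'
  have h6 : (((1:ℝ)/2 : ℝ) : ℂ) = ((t:ℝ) : ℂ) := by push_cast; linear_combination h5
  have : (1:ℝ)/2 = t := Complex.ofReal_injective h6
  linarith
end

section
/- Let $G$ be a group with subgroups $H \subseteq K \cap L$, $H \ne K$, $H \ne L$, and $[G:H] < \infty$. Then $\frac{[K\cap L : H]-1}{\sqrt{[K:H]-1}\sqrt{[L:H]-1}} = 1$ if and only if $K = L$. -/
/-!
With `a = [K ⊓ L : H] ≤ b = [K : H]` and `a ≤ c = [L : H]`, we have `(a - 1)² ≤ (b - 1)(c - 1)`,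
with equality only if `a = b = c`; and `[K ⊓ L : H] = [K : H]` forces `K ≤ K ⊓ L` by
multiplicativity of the index in the tower `H ≤ K ⊓ L ≤ K`.
-/

theorem eq_and_eq_of_div_sqrt_mul_sqrt_eq_one {x y z : ℝ} (hx : 0 ≤ x) (hxy : x ≤ y)
    (hxz : x ≤ z) (h : x / (√y * √z) = 1) : x = y ∧ x = z := by
  have hden : √y * √z ≠ 0 := by
    rintro h0
    simp [h0] at h
  have hy : 0 < y := Real.sqrt_ne_zero'.mp (left_ne_zero_of_mul hden)
  have hz : 0 < z := Real.sqrt_ne_zero'.mp (right_ne_zero_of_mul hden)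
  have hsq : x ^ 2 = y * z := by
    rw [(div_eq_one_iff_eq hden).mp h, mul_pow, Real.sq_sqrt hy.le, Real.sq_sqrt hz.le]
  constructor <;> nlinarith

namespace Subgroup

theorem le_of_relIndex_eq_relIndex {G : Type*} [Group G] {H M K : Subgroup G}
    (hHM : H ≤ M) (hMK : M ≤ K) (hK : H.relIndex K ≠ 0) (h : H.relIndex M = H.relIndex K) :
    K ≤ M := by
  have hMK1 : M.relIndex K = 1 := by
    refine Nat.eq_of_mul_eq_mul_left (Nat.pos_of_ne_zero (h ▸ hK)) ?_
    rw [relIndex_mul_relIndex H M K hHM hMK, h, mul_one]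
  exact relIndex_eq_one.mp hMK1

end Subgroup

theorem stmt_15_general {G : Type*} [Group G] (H K L : Subgroup G)
    (hHK : H ≤ K) (hHL : H ≤ L) (hK : H ≠ K)
    (hfin : H.index ≠ 0) :
    ((H.relIndex (K ⊓ L) : ℝ) - 1) /
        (Real.sqrt ((H.relIndex K : ℝ) - 1) * Real.sqrt ((H.relIndex L : ℝ) - 1)) = 1
      ↔ K = L := by
  have hfin' {M : Subgroup G} : H.relIndex M ≠ 0 := mt Subgroup.index_eq_zero_of_relIndex_eq_zero hfin
  have hpos {M : Subgroup G} : (0 : ℝ) ≤ H.relIndex M - 1 := by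
    rw [sub_nonneg, Nat.one_le_cast]
    exact Nat.one_le_iff_ne_zero.mpr hfin'
  have hHKL : H ≤ K ⊓ L := le_inf hHK hHL
  constructor
  · intro h
    have hle {M : Subgroup G} (hM : K ⊓ L ≤ M) :
        (H.relIndex (K ⊓ L) : ℝ) - 1 ≤ H.relIndex M - 1 := by
      gcongr
      exact Subgroup.relIndex_le_of_le_right hM hfin'
    obtain ⟨hKL, hLK⟩ :=
      eq_and_eq_of_div_sqrt_mul_sqrt_eq_one hpos (hle inf_le_left) (hle inf_le_right) h
    simp only [sub_left_inj, Nat.cast_inj] at hKL hLK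
    exact le_antisymm
      ((Subgroup.le_of_relIndex_eq_relIndex hHKL inf_le_left hfin' hKL).trans inf_le_right)
      ((Subgroup.le_of_relIndex_eq_relIndex hHKL inf_le_right hfin' hLK).trans inf_le_left)
  · rintro rfl
    have hne : (H.relIndex K : ℝ) - 1 ≠ 0 := by
      rw [sub_ne_zero, Nat.cast_ne_one]
      exact fun h1 => hK (le_antisymm hHK (Subgroup.relIndex_eq_one.mp h1))
    rw [inf_idem, Real.mul_self_sqrt hpos, div_self hne]

theorem stmt_15 {G : Type*} [Group G] (H K L : Subgroup G)
    (hHK : H ≤ K) (hHL : H ≤ L) (hK : H ≠ K) (hL : H ≠ L)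
    (hfin : H.index ≠ 0) :
    ((H.relIndex (K ⊓ L) : ℝ) - 1) /
        (Real.sqrt ((H.relIndex K : ℝ) - 1) * Real.sqrt ((H.relIndex L : ℝ) - 1)) = 1
      ↔ K = L :=
  stmt_15_general H K L hHK hHL hK hfin
end
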